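/- arXiv:1805.05933 — 4 statements merged into one kernel-verified Lean document; each statement's English description precedes it below -/
import Mathlib

section
/- Let I be an infinite hyperfinite interval and A an internal subset of *ℕ. For any ε > 0, if λ_I(A) > 1 − ε then g_A(I) < ε, where λ_I(A) is the Lebesgue measure of st_I(A ∩ I) and g_A(I) = (d−c)/|I| for [c,d] ⊆ I a maximal subinterval disjoint from A. -/
open Filter Set MeasureTheory

/-- The hypernatural numbers: the ultrapower of `ℕ` by the hyperfilter. -/
abbrev SN : Type := Filter.Germ (Filter.hyperfilter ℕ : Filter ℕ) ℕ

/-- Membership of a hypernatural in the internal set determined by a sequence of sets. -/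
def memF (F : ℕ → Set ℕ) (x : SN) : Prop :=
  x.liftOn (fun f => ∀ᶠ i in (Filter.hyperfilter ℕ : Filter ℕ), f i ∈ F i)
    (by
      intro f g h
      exact propext (eventually_congr (h.mono fun i hi => by rw [hi])))

/-- A set of hypernaturals is internal if it is determined by a sequence of subsets of `ℕ`. -/
def InternalSet (A : Set SN) : Prop := ∃ F : ℕ → Set ℕ, A = {x | memF F x}

/-- The nonstandard extension `*A ⊆ *ℕ` of a set `A ⊆ ℕ`. -/
def starN (A : Set ℕ) : Set SN := {x | memF (fun _ => A) x}

/-- The canonical map from the hypernaturals to the hyperreals. -/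
noncomputable def toR (x : SN) : Hyperreal := Filter.Germ.map (fun n : ℕ => (n : ℝ)) x

/-- `[y,z]` is an infinite (hyperfinite) interval. -/
def InfInterval (y z : SN) : Prop := ∀ n : ℕ, y + (n : SN) < z

/-- The map `st_I : I → [0,1]`, `st_I(a) = st((a-y)/(z-y))`. -/
noncomputable def stI (y z : SN) (x : SN) : ℝ :=
  Hyperreal.st ((toR x - toR y) / (toR z - toR y))

/-- `λ_I(A)`: Lebesgue measure of the standard part image of `A ∩ I`, `I = [y,z]`. -/
noncomputable def lam (A : Set SN) (y z : SN) : ℝ :=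
  (volume (stI y z '' (A ∩ Set.Icc y z))).toReal

/-- `g_A(I)`: the normalized length of the largest gap of `A` on `I = [y,z]`. -/
noncomputable def gap (A : Set SN) (y z : SN) : ℝ :=
  sSup {r : ℝ | 0 ≤ r ∧ ∃ c d : SN, c ∈ Set.Icc y z ∧ d ∈ Set.Icc y z ∧ c ≤ d ∧
    Set.Icc c d ∩ A = ∅ ∧ (r : Hyperreal) ≤ (toR d - toR c) / (toR z - toR y)}

/-- `A` has the interval-measure (IM) property on `I = [y,z]`. -/
def IMOn (A : Set SN) (y z : SN) : Prop :=
  ∀ ε : ℝ, 0 < ε → ∃ δ : ℝ, 0 < δ ∧ ∀ c d : SN, y ≤ c → c ≤ d → d ≤ z →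
    InfInterval c d → gap A c d ≤ δ → 1 - ε ≤ lam A c d

/-- `A` has the enhanced IM property on `I = [y,z]`. -/
def EnhancedIMOn (A : Set SN) (y z : SN) : Prop := IMOn A y z ∧ 0 < lam A y z

/-- `A ⊆ ℕ` has the standard interval-measure (SIM) property. -/
def SIM (A : Set ℕ) : Prop :=
  (∀ y z : SN, InfInterval y z → IMOn (starN A) y z) ∧
  ∃ y z : SN, InfInterval y z ∧ EnhancedIMOn (starN A) y z

/-- `A ⊆ ℕ` is supra-SIM if it contains a SIM set. -/
def SupraSIM (A : Set ℕ) : Prop := ∃ B ⊆ A, SIM B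


lemma not_inf_of_bdd {x : Hyperreal} {r s : ℝ} (h1 : (r : Hyperreal) ≤ x)
    (h2 : x ≤ (s : Hyperreal)) : ¬ x.Infinite := by
  rw [Hyperreal.not_infinite_iff_exist_lt_gt]
  exact ⟨r - 1, s + 1,
    lt_of_lt_of_le (by exact_mod_cast sub_one_lt r) h1,
    lt_of_le_of_lt h2 (by exact_mod_cast lt_add_one s)⟩

lemma toR_le_toR {a b : SN} (h : a ≤ b) : toR a ≤ toR b := by
  induction a using Filter.Germ.inductionOn with | _ f =>
  induction b using Filter.Germ.inductionOn with | _ g =>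
  rw [Filter.Germ.coe_le] at h
  simp only [toR, Filter.Germ.map_coe]
  exact Filter.Germ.coe_le.mpr (h.mono fun i hi => by
    simp only [Function.comp_apply]; exact_mod_cast hi)

lemma toR_inj {a b : SN} (h : toR a = toR b) : a = b := by
  induction a using Filter.Germ.inductionOn with | _ f =>
  induction b using Filter.Germ.inductionOn with | _ g =>
  simp only [toR, Filter.Germ.map_coe] at h
  exact Filter.Germ.coe_eq.mpr ((Filter.Germ.coe_eq.mp h).mono fun i hi => by
    simpa using Nat.cast_injective (R := ℝ) hi)

lemma toR_lt_toR {a b : SN} (h : a < b) : toR a < toR b :=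
  lt_of_le_of_ne (toR_le_toR h.le) fun he => h.ne (toR_inj he)

theorem stmt_1 (A : Set SN) (y z : SN) (hA : InternalSet A) (hI : InfInterval y z)
    (ε : ℝ) (hε : 0 < ε) (h : 1 - ε < lam A y z) : gap A y z < ε := by
  -- basic setup
  have hyz : y < z := by simpa using hI 0
  have hD : (0 : Hyperreal) < toR z - toR y := sub_pos.mpr (toR_lt_toR hyz)
  set D : Hyperreal := toR z - toR y with hDdef
  -- the quotient map
  set q : SN → Hyperreal := fun a => (toR a - toR y) / D with hq
  have hq01 : ∀ a : SN, a ∈ Set.Icc y z → (0 : Hyperreal) ≤ q a ∧ q a ≤ 1 := by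
    intro a ⟨h1, h2⟩
    constructor
    · exact div_nonneg (sub_nonneg.mpr (toR_le_toR h1)) hD.le
    · rw [div_le_one hD]
      exact sub_le_sub_right (toR_le_toR h2) _
  have hqni : ∀ a : SN, a ∈ Set.Icc y z → ¬ (q a).Infinite := by
    intro a ha
    obtain ⟨h0, h1⟩ := hq01 a ha
    exact not_inf_of_bdd (by exact_mod_cast h0) (by exact_mod_cast h1)
  have hst01 : ∀ a : SN, a ∈ Set.Icc y z → stI y z a ∈ Set.Icc (0:ℝ) 1 := by
    intro a ha
    obtain ⟨h0, h1⟩ := hq01 a ha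
    have hni := hqni a ha
    constructor
    · have hle : (((0:ℝ)) : Hyperreal) ≤ q a := by exact_mod_cast h0
      have h2 := Hyperreal.st_le_of_le (Hyperreal.not_infinite_real 0) hni hle
      rw [Hyperreal.st_id_real] at h2
      exact h2
    · have hle : q a ≤ (((1:ℝ)) : Hyperreal) := by exact_mod_cast h1
      have h2 := Hyperreal.st_le_of_le hni (Hyperreal.not_infinite_real 1) hle
      rw [Hyperreal.st_id_real] at h2
      exact h2
  have hstmono : ∀ a b : SN, a ∈ Set.Icc y z → b ∈ Set.Icc y z → a ≤ b →
      stI y z a ≤ stI y z b := by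
    intro a b ha hb hab
    refine Hyperreal.st_le_of_le (hqni a ha) (hqni b hb) ?_
    gcongr
    exact toR_le_toR hab
  -- image is inside [0,1]
  have himg : stI y z '' (A ∩ Set.Icc y z) ⊆ Set.Icc (0:ℝ) 1 := by
    rintro _ ⟨a, ⟨_, ha⟩, rfl⟩
    exact hst01 a ha
  have hlam_le_one : lam A y z ≤ 1 := by
    have hm : volume (stI y z '' (A ∩ Set.Icc y z)) ≤ volume (Set.Icc (0:ℝ) 1) :=
      measure_mono himg
    have : volume (Set.Icc (0:ℝ) 1) = 1 := by simp
    rw [this] at hm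
    calc lam A y z ≤ (1 : ENNReal).toReal := ENNReal.toReal_mono (by simp) hm
      _ = 1 := by simp
  -- main bound: gap ≤ 1 - lam
  have hgap : gap A y z ≤ 1 - lam A y z := by
    apply Real.sSup_le _ (by linarith)
    rintro r ⟨hr0, c, d, hc, hd, hcd, hdisj, hrle⟩
    set p : ℝ := stI y z c with hp
    set s : ℝ := stI y z d with hs
    have hp01 := hst01 c hc
    have hs01 := hst01 d hd
    -- r ≤ s - p
    have hqsub : q d - q c = (toR d - toR c) / D := by
      rw [hq]
      rw [div_sub_div_same, sub_sub_sub_cancel_right]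
    have hrsp : r ≤ s - p := by
      have h1 : (r : Hyperreal) ≤ q d - q c := by rw [hqsub]; exact hrle
      have h2 : Hyperreal.st (q d - q c) = s - p := by
        rw [sub_eq_add_neg, Hyperreal.st_add (hqni d hd)
          (by
            obtain ⟨h0c, h1c⟩ := hq01 c hc
            exact not_inf_of_bdd (r := -1) (s := 0)
              (by push_cast; linarith) (by push_cast; linarith)),
          Hyperreal.st_neg, ← sub_eq_add_neg]
        rfl
      have h3 := Hyperreal.st_le_of_le (Hyperreal.not_infinite_real r)
        (by
          apply not_inf_of_bdd (r := -1) (s := 1)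
          · obtain ⟨h0d, h1d⟩ := hq01 d hd
            obtain ⟨h0c, h1c⟩ := hq01 c hc
            push_cast
            linarith
          · obtain ⟨h0d, h1d⟩ := hq01 d hd
            obtain ⟨h0c, h1c⟩ := hq01 c hc
            push_cast
            linarith) h1
      rw [Hyperreal.st_id_real, h2] at h3
      exact h3
    -- image avoids (p, s)
    have himg2 : stI y z '' (A ∩ Set.Icc y z) ⊆ Set.Icc 0 p ∪ Set.Icc s 1 := by
      rintro _ ⟨a, ⟨haA, ha⟩, rfl⟩
      have hna : a ∉ Set.Icc c d := fun hmem =>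
        Set.eq_empty_iff_forall_notMem.mp hdisj a ⟨hmem, haA⟩
      have h01 := hst01 a ha
      rcases lt_or_ge a c with hlt | hge
      · left
        exact ⟨h01.1, hstmono a c ha hc hlt.le⟩
      · right
        have hda : d ≤ a := le_of_lt (lt_of_not_ge fun hle => hna ⟨hge, hle⟩)
        exact ⟨hstmono d a hd ha hda, h01.2⟩
    -- measure bound
    have hvol : lam A y z ≤ p + (1 - s) := by
      have hm : volume (stI y z '' (A ∩ Set.Icc y z)) ≤
          ENNReal.ofReal p + ENNReal.ofReal (1 - s) := by
        refine le_trans (measure_mono himg2) (le_trans (measure_union_le _ _) ?_)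
        rw [Real.volume_Icc, Real.volume_Icc]
        simp
      calc lam A y z ≤ (ENNReal.ofReal p + ENNReal.ofReal (1 - s)).toReal :=
            ENNReal.toReal_mono (by finiteness) hm
        _ = p + (1 - s) := by
            rw [ENNReal.toReal_add ENNReal.ofReal_ne_top ENNReal.ofReal_ne_top,
              ENNReal.toReal_ofReal hp01.1, ENNReal.toReal_ofReal (by linarith [hs01.2])]
    linarith
  linarith
end

section
/- Suppose A has the IM property on I and the following equivalence holds: there is an infinite subinterval J of I on which A has the nontrivial IM property if and only if there is an infinite subinterval J of I with λ_J(A) > 0. -/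
open Filter Set MeasureTheory

/-- `A` has the nontrivial IM property on `[y,z]`: it has the IM property and there are
infinite subintervals with arbitrarily small normalized largest gap. -/
def NontrivialIMOn (A : Set SN) (y z : SN) : Prop :=
  IMOn A y z ∧ ∀ δ : ℝ, 0 < δ →
    ∃ c d : SN, y ≤ c ∧ c ≤ d ∧ d ≤ z ∧ InfInterval c d ∧ gap A c d ≤ δ

/-!
If `[c, d]` has the nontrivial IM property, the IM property with `ε = 1/2` applied to an infinite
subinterval with small enough gap gives `λ ≥ 1/2` there. Conversely, if `λ_[c,d](A) > 0`, the IM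
property is inherited from `I`, and small gaps come from the Lebesgue density theorem: near a
density point of `E = st_[c,d](A ∩ [c, d]) ⊆ [0, 1]` there is an interval `[a, b]` in which every
gap of `E` is shorter than `δ (b - a)`. As `st_[c,d]` maps `[c, d]` onto `[0, 1]`, there are `c'`,
`d'` with standard positions `a < b`; then `[c', d']` is infinite, and a gap `[u, v]` of `A` inside
it projects to a gap of `E`, so `g_A([c', d']) ≤ δ`.
-/

open Hyperreal ArchimedeanClass

section toR

variable {u v : SN}

lemma toR_coe (f : ℕ → ℕ) : toR (f : SN) = ofSeq (fun i => (f i : ℝ)) := rfl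

lemma toR_le_toR_s5 : toR u ≤ toR v ↔ u ≤ v := by
  induction u using Germ.inductionOn with | h f =>
  induction v using Germ.inductionOn with | h g =>
  simp only [toR_coe, ofSeq_le_ofSeq, Nat.cast_le]
  rfl

lemma toR_lt_toR_s5 : toR u < toR v ↔ u < v :=
  lt_iff_lt_of_le_iff_le toR_le_toR_s5

lemma toR_add : toR (u + v) = toR u + toR v := by
  induction u using Germ.inductionOn with | h f =>
  induction v using Germ.inductionOn with | h g =>
  exact congrArg ofSeq (funext fun i => Nat.cast_add (f i) (g i))

lemma toR_natCast (n : ℕ) : toR n = ((n : ℝ) : ℝ*) := rfl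

end toR

lemma infInterval_iff_forall_lt {y z : SN} :
    InfInterval y z ↔ ∀ r : ℝ, (r : ℝ*) < toR z - toR y := by
  refine ⟨fun h r => ?_, fun h n => ?_⟩
  · have hn := toR_lt_toR_s5.2 (h ⌈r⌉₊)
    rw [toR_add, toR_natCast] at hn
    have hr : (r : ℝ*) ≤ (⌈r⌉₊ : ℝ) := coe_le_coe.2 (Nat.le_ceil r)
    linarith
  · have hn := h n
    rw [← toR_lt_toR_s5, toR_add, toR_natCast]
    linarith

section RelativePosition

variable {y z u v c d : SN}

noncomputable def relPos (y z u : SN) : ℝ* := (toR u - toR y) / (toR z - toR y)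

set_option linter.deprecated false in
lemma stI_eq_stdPart : stI y z u = stdPart (relPos y z u) := st_eq _

lemma toR_sub_pos (hI : InfInterval y z) : 0 < toR z - toR y := by
  simpa using infInterval_iff_forall_lt.1 hI 0

lemma relPos_mono (hI : InfInterval y z) (huv : u ≤ v) : relPos y z u ≤ relPos y z v := by
  have := toR_le_toR_s5.2 huv
  unfold relPos
  gcongr
  exact (toR_sub_pos hI).le

lemma relPos_mem_Icc (hI : InfInterval y z) (hu : u ∈ Icc y z) :
    relPos y z u ∈ Icc 0 1 := by
  have hyz := toR_sub_pos hI
  have hyu := toR_le_toR_s5.2 hu.1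
  have huz := toR_le_toR_s5.2 hu.2
  exact ⟨div_nonneg (by linarith) hyz.le, (div_le_one hyz).2 (by linarith)⟩

lemma mk_relPos_nonneg (hI : InfInterval y z) (hu : u ∈ Icc y z) :
    0 ≤ ArchimedeanClass.mk (relPos y z u) := by
  have h := relPos_mem_Icc hI hu
  exact mk_nonneg_of_le_of_le_of_archimedean coeRingHom (r := 0) (s := 1)
    (by simpa using h.1) (by simpa using h.2)

lemma stI_mem_Icc (hI : InfInterval y z) (hu : u ∈ Icc y z) : stI y z u ∈ Icc 0 1 := by
  have h := relPos_mem_Icc hI hu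
  rw [stI_eq_stdPart]
  exact ⟨stdPart_nonneg h.1,
    stdPart_le_of_le coeRingHom (mk_relPos_nonneg hI hu) (by simpa using h.2)⟩

lemma stI_monotoneOn (hI : InfInterval y z) : MonotoneOn (stI y z) (Icc y z) := by
  intro u hu v hv huv
  simp only [stI_eq_stdPart]
  exact stdPart_monotoneOn (mk_relPos_nonneg hI hu) (mk_relPos_nonneg hI hv)
    (relPos_mono hI huv)

lemma exists_stI_eq (hI : InfInterval y z) {p : ℝ} (hp : p ∈ Icc 0 1) :
    ∃ u ∈ Icc y z, stI y z u = p := by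
  induction y using Germ.inductionOn with | h f =>
  induction z using Germ.inductionOn with | h g =>
  set N : ℕ → ℝ := fun i => (g i : ℝ) - f i
  have hN : Tendsto N (hyperfilter ℕ) atTop := tendsto_atTop.2 fun r =>
    (ofSeq_lt_ofSeq.1 (infInterval_iff_forall_lt.1 hI r)).mono fun _ hi => hi.le
  refine ⟨((fun i => f i + ⌊p * N i⌋₊ : ℕ → ℕ) : SN),
    ⟨Germ.coe_le.2 (.of_forall fun i => Nat.le_add_right _ _), Germ.coe_le.2 ?_⟩, ?_⟩
  · filter_upwards [hN.eventually_ge_atTop 0] with i hi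
    have : (⌊p * N i⌋₊ : ℝ) ≤ N i :=
      (Nat.floor_le (by nlinarith [hp.1])).trans (mul_le_of_le_one_left hi hp.2)
    have : (f i : ℝ) + ⌊p * N i⌋₊ ≤ g i := by linarith
    exact_mod_cast this
  · rw [stI_eq_stdPart]
    refine stdPart_of_tendsto ((tendsto_nat_floor_mul_div_atTop hp.1).comp hN |>.congr fun i => ?_)
    simp only [Function.comp_apply]
    push_cast
    ring

lemma infInterval_of_stI_lt (hI : InfInterval y z) (hu : u ∈ Icc y z) (hv : v ∈ Icc y z)
    (h : stI y z u < stI y z v) : InfInterval u v := by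
  rw [infInterval_iff_forall_lt]
  intro r
  set q := (stI y z v - stI y z u) / 2
  have hq : 0 < q := half_pos (sub_pos.2 h)
  have hu0 := mk_relPos_nonneg hI hu
  have hv0 := mk_relPos_nonneg hI hv
  have hX : (q : ℝ*) < relPos y z v - relPos y z u := by
    refine lt_of_lt_stdPart coeRingHom ((le_min hv0 hu0).trans (min_le_mk_sub _ _)) ?_
    rw [stdPart_sub hv0 hu0, ← stI_eq_stdPart, ← stI_eq_stdPart]
    exact half_lt_self (sub_pos.2 h)
  have hD := infInterval_iff_forall_lt.1 hI (|r| / q)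
  have hc : ((|r| / q : ℝ) : ℝ*) * q = |r| := by rw [← coe_mul, div_mul_cancel₀ _ hq.ne']
  have hc0 : (0 : ℝ*) ≤ ((|r| / q : ℝ) : ℝ*) := coe_nonneg.2 (by positivity)
  have hr : (r : ℝ*) ≤ |r| := coe_le_coe.2 (le_abs_self r)
  have hq' : (0 : ℝ*) < q := coe_pos.2 hq
  have key : toR v - toR u = (relPos y z v - relPos y z u) * (toR z - toR y) := by
    unfold relPos
    field_simp [(toR_sub_pos hI).ne']
    ring
  rw [key]
  nlinarith

lemma stdPart_toR_sub_div (hI : InfInterval y z) (hu : u ∈ Icc y z) (hv : v ∈ Icc y z)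
    (hc : c ∈ Icc y z) (hd : d ∈ Icc y z) (hcd : stI y z c ≠ stI y z d) :
    0 ≤ ArchimedeanClass.mk ((toR v - toR u) / (toR d - toR c)) ∧
      stdPart ((toR v - toR u) / (toR d - toR c)) =
        (stI y z v - stI y z u) / (stI y z d - stI y z c) := by
  have hquot : (toR v - toR u) / (toR d - toR c) =
      (relPos y z v - relPos y z u) / (relPos y z d - relPos y z c) := by
    unfold relPos
    rw [← sub_div, ← sub_div, div_div_div_cancel_right₀ (toR_sub_pos hI).ne']
    ring_nf
  have hnum := (le_min (mk_relPos_nonneg hI hv) (mk_relPos_nonneg hI hu)).trans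
    (min_le_mk_sub _ _)
  have hden_st : stdPart (relPos y z d - relPos y z c) = stI y z d - stI y z c := by
    rw [stdPart_sub (mk_relPos_nonneg hI hd) (mk_relPos_nonneg hI hc), stI_eq_stdPart,
      stI_eq_stdPart]
  have hden0 : ArchimedeanClass.mk (relPos y z d - relPos y z c) = 0 :=
    not_ne_iff.1 (stdPart_eq_zero.not.1 (hden_st ▸ sub_ne_zero.2 hcd.symm))
  rw [hquot]
  refine ⟨by rwa [mk_div, hden0, sub_zero], ?_⟩
  rw [stdPart_div hnum (by rw [hden0, neg_zero]), hden_st,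
    stdPart_sub (mk_relPos_nonneg hI hv) (mk_relPos_nonneg hI hu), ← stI_eq_stdPart,
    ← stI_eq_stdPart]

lemma gap_le_of_forall_stI_gap_le {A : Set SN} {δ : ℝ} (hI : InfInterval y z)
    (hc : c ∈ Icc y z) (hd : d ∈ Icc y z) (hcd : stI y z c < stI y z d) (hδ : 0 ≤ δ)
    (hgaps : ∀ s t, stI y z c ≤ s → t ≤ stI y z d →
      stI y z '' (A ∩ Icc y z) ∩ Ioo s t = ∅ → t - s ≤ δ * (stI y z d - stI y z c)) :
    gap A c d ≤ δ := by
  refine Real.sSup_le ?_ hδ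
  rintro r ⟨-, u, v, hu, hv, -, huvA, hr⟩
  have hu' : u ∈ Icc y z := ⟨hc.1.trans hu.1, hu.2.trans hd.2⟩
  have hv' : v ∈ Icc y z := ⟨hc.1.trans hv.1, hv.2.trans hd.2⟩
  have hmono := stI_monotoneOn hI
  have hempty : stI y z '' (A ∩ Icc y z) ∩ Ioo (stI y z u) (stI y z v) = ∅ := by
    refine eq_empty_of_forall_notMem ?_
    rintro _ ⟨⟨x, ⟨hxA, hx⟩, rfl⟩, hux, hxv⟩
    have hxuv : x ∈ Icc u v ∩ A :=
      ⟨⟨(hmono.reflect_lt hu' hx hux).le, (hmono.reflect_lt hx hv' hxv).le⟩, hxA⟩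
    rwa [huvA] at hxuv
  have hlen := hgaps _ _ (hmono hc hu' hu.1) (hmono hv' hd hv.2) hempty
  obtain ⟨hmk, hst⟩ := stdPart_toR_sub_div hI hu' hv' hc hd hcd.ne
  calc r ≤ (stI y z v - stI y z u) / (stI y z d - stI y z c) :=
        hst ▸ le_stdPart_of_le coeRingHom hmk hr
    _ ≤ δ := (div_le_iff₀ (sub_pos.2 hcd)).2 hlen

end RelativePosition

lemma volume_inter_Icc_le_of_inter_Ioo_eq_empty {E : Set ℝ} {a b s t : ℝ} (has : a ≤ s)
    (htb : t ≤ b) (hE : E ∩ Ioo s t = ∅) :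
    volume (E ∩ Icc a b) ≤ ENNReal.ofReal (b - a - (t - s)) := by
  have hsub : E ∩ Icc a b ⊆ Icc a s ∪ Icc t b := by
    rintro e ⟨he, hae, heb⟩
    by_cases hes : e ≤ s
    · exact Or.inl ⟨hae, hes⟩
    · refine Or.inr ⟨not_lt.1 fun het => ?_, heb⟩
      exact eq_empty_iff_forall_notMem.1 hE e ⟨he, not_le.1 hes, het⟩
  calc volume (E ∩ Icc a b) ≤ volume (Icc a s ∪ Icc t b) := measure_mono hsub
    _ ≤ volume (Icc a s) + volume (Icc t b) := measure_union_le _ _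
    _ = ENNReal.ofReal (b - a - (t - s)) := by
      rw [Real.volume_Icc, Real.volume_Icc, ← ENNReal.ofReal_add (by linarith) (by linarith)]
      ring_nf

lemma exists_Icc_forall_gap_le {E : Set ℝ} {l u : ℝ} (hE : E ⊆ Icc l u) (hE0 : volume E ≠ 0)
    {δ : ℝ} (hδ : 0 < δ) :
    ∃ a b, l ≤ a ∧ a < b ∧ b ≤ u ∧
      ∀ s t, a ≤ s → t ≤ b → E ∩ Ioo s t = ∅ → t - s ≤ δ * (b - a) := by
  have : (ae (volume.restrict E)).NeBot := ae_neBot.2 (by simpa using hE0)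
  have hIoo : ∀ᵐ x ∂volume.restrict E, x ∈ Ioo l u := by
    refine ae_mono (Measure.restrict_mono hE le_rfl) ?_
    rw [← Measure.restrict_congr_set Ioo_ae_eq_Icc]
    exact ae_restrict_mem measurableSet_Ioo
  obtain ⟨x, hdens, hx⟩ := ((Besicovitch.ae_tendsto_measure_inter_div volume E).and hIoo).exists
  have hm : 0 < min (x - l) (u - x) := lt_min (sub_pos.2 hx.1) (sub_pos.2 hx.2)
  obtain ⟨r, hr, hr0, hrm⟩ := ((hdens.eventually (eventually_gt_nhds
    (ENNReal.ofReal_lt_one.2 (sub_lt_self 1 hδ)))).and (Ioo_mem_nhdsGT hm)).exists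
  refine ⟨x - r, x + r, by linarith [min_le_left (x - l) (u - x)], by linarith,
    by linarith [min_le_right (x - l) (u - x)], fun s t hs ht hst => ?_⟩
  rw [Real.closedBall_eq_Icc, Real.volume_Icc] at hr
  have hlt := (ENNReal.mul_lt_of_lt_div hr).trans_le
    (volume_inter_Icc_le_of_inter_Ioo_eq_empty hs ht hst)
  rw [← ENNReal.ofReal_mul' (by linarith), ENNReal.ofReal_lt_ofReal_iff'] at hlt
  linarith [hlt.1]

lemma exists_gap_le_of_lam_pos {A : Set SN} {c d : SN} (hI : InfInterval c d)
    (hlam : 0 < lam A c d) {δ : ℝ} (hδ : 0 < δ) :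
    ∃ c' d', c ≤ c' ∧ c' ≤ d' ∧ d' ≤ d ∧ InfInterval c' d' ∧ gap A c' d' ≤ δ := by
  have hE : stI c d '' (A ∩ Icc c d) ⊆ Icc 0 1 :=
    image_subset_iff.2 fun u hu => stI_mem_Icc hI hu.2
  have hE0 : volume (stI c d '' (A ∩ Icc c d)) ≠ 0 := fun h => hlam.ne' (by rw [lam, h]; rfl)
  obtain ⟨a, b, ha, hab, hb, hgaps⟩ := exists_Icc_forall_gap_le hE hE0 hδ
  obtain ⟨c', hc', rfl⟩ := exists_stI_eq hI ⟨ha, hab.le.trans hb⟩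
  obtain ⟨d', hd', rfl⟩ := exists_stI_eq hI ⟨ha.trans hab.le, hb⟩
  exact ⟨c', d', hc'.1, ((stI_monotoneOn hI).reflect_lt hc' hd' hab).le, hd'.2,
    infInterval_of_stI_lt hI hc' hd' hab, gap_le_of_forall_stI_gap_le hI hc' hd' hab hδ.le hgaps⟩

lemma IMOn.mono {A : Set SN} {y z c d : SN} (h : IMOn A y z) (hyc : y ≤ c) (hdz : d ≤ z) :
    IMOn A c d := fun η hη => by
  obtain ⟨δ, hδ, hlam⟩ := h η hη
  exact ⟨δ, hδ, fun c' d' hc' hcd' hd' => hlam c' d' (hyc.trans hc') hcd' (hd'.trans hdz)⟩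

lemma NontrivialIMOn.exists_lam_pos {A : Set SN} {c d : SN} (h : NontrivialIMOn A c d) :
    ∃ c' d', c ≤ c' ∧ c' ≤ d' ∧ d' ≤ d ∧ InfInterval c' d' ∧ 0 < lam A c' d' := by
  obtain ⟨δ, hδ, hlam⟩ := h.1 (1 / 2) one_half_pos
  obtain ⟨c', d', hc', hcd', hd', hI', hgap⟩ := h.2 δ hδ
  exact ⟨c', d', hc', hcd', hd', hI', by linarith [hlam c' d' hc' hcd' hd' hI' hgap]⟩

theorem stmt_5_general (A : Set SN) (y z : SN)
    (hIM : IMOn A y z) :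
    (∃ c d : SN, y ≤ c ∧ c ≤ d ∧ d ≤ z ∧ InfInterval c d ∧ NontrivialIMOn A c d) ↔
      (∃ c d : SN, y ≤ c ∧ c ≤ d ∧ d ≤ z ∧ InfInterval c d ∧ 0 < lam A c d) := by
  constructor
  · rintro ⟨c, d, hyc, -, hdz, -, hN⟩
    obtain ⟨c', d', hcc', hcd', hdd', hI', hlam⟩ := hN.exists_lam_pos
    exact ⟨c', d', hyc.trans hcc', hcd', hdd'.trans hdz, hI', hlam⟩
  · rintro ⟨c, d, hyc, hcd, hdz, hI, hlam⟩
    exact ⟨c, d, hyc, hcd, hdz, hI, hIM.mono hyc hdz,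
      fun δ hδ => exists_gap_le_of_lam_pos hI hlam hδ⟩

theorem stmt_5 (A : Set SN) (y z : SN) (hA : InternalSet A) (hI : InfInterval y z)
    (hIM : IMOn A y z) :
    (∃ c d : SN, y ≤ c ∧ c ≤ d ∧ d ≤ z ∧ InfInterval c d ∧ NontrivialIMOn A c d) ↔
      (∃ c d : SN, y ≤ c ∧ c ≤ d ∧ d ≤ z ∧ InfInterval c d ∧ 0 < lam A c d) :=
  stmt_5_general A y z hIM
end

section
/- Being SIM is not partition regular: there exists a set A ⊆ ℕ such that neither A nor ℕ∖A has the SIM property, witnessed by the set consisting of successive blocks of m elements in and m elements out, with m increasing by 1 each time. -/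
open Filter Set MeasureTheory

/-!
The set `A` is the union of the blocks `(m² - m, m²]`, and its complement is `{0}` together with
the blocks `(m², m² + m]`. Both sets meet every interval `[n, n + 2√n + 2]`, so on the hyperfinite
window `[i², (i + K)²]`, of length `2iK + K²`, their gaps have relative length at most `2 / K`.
Yet the window contains at most `K + 1` blocks of either set, each of relative length about
`1 / (2K)`, so the standard part image of the set lies in `K + 1` intervals of length `3 / (4K)`
and has measure at most `15 / 16` once `K ≥ 4`. Choosing `K ≥ 2 / δ` shows that neither set has
the IM property on `[i², i³]`.
-/

open Hyperreal

lemma eventually_le_hyperfilter (n : ℕ) : ∀ᶠ i in hyperfilter ℕ, n ≤ i :=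
  (eventually_ge_atTop n).filter_mono Nat.hyperfilter_le_atTop

lemma st_mem_Icc {x : ℝ*} {u v : ℝ} (hu : (u : ℝ*) ≤ x) (hv : x ≤ v) : st x ∈ Icc u v := by
  have hx : 0 ≤ ArchimedeanClass.mk x :=
    ArchimedeanClass.mk_nonneg_of_le_of_le_of_archimedean coeRingHom hu hv
  rw [st_eq]
  exact ⟨ArchimedeanClass.le_stdPart_of_le coeRingHom hx hu,
    ArchimedeanClass.stdPart_le_of_le coeRingHom hx hv⟩

lemma infInterval_coe {c d : ℕ → ℕ} (h : ∀ n : ℕ, ∀ᶠ i in atTop, c i + n < d i) :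
    InfInterval c d :=
  fun n => Germ.coe_lt.2 ((h n).filter_mono Nat.hyperfilter_le_atTop)

lemma gap_starN_le {S : Set ℕ} {L : ℕ → ℕ} (hL : Monotone L)
    (hS : ∀ n, ∃ a ∈ S, n ≤ a ∧ a ≤ n + L n) {c d : ℕ → ℕ} {r : ℝ} (hr : 0 ≤ r)
    (hcd : ∀ᶠ i in hyperfilter ℕ, (L (d i) : ℝ) ≤ r * ((d i : ℝ) - c i)) :
    gap (starN S) c d ≤ r := by
  choose next hnextS hle_next hnext_le using hS
  refine Real.sSup_le ?_ hr
  rintro s ⟨-, c', d', ⟨hcc', hc'd⟩, -, hc'd', hempty, hs⟩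
  induction c' using Germ.inductionOn with | h u => ?_
  induction d' using Germ.inductionOn with | h v => ?_
  have hbeyond : (v : SN) < ↑(next ∘ u) := by
    by_contra! hle
    have hmem : (↑(next ∘ u) : SN) ∈ Icc (u : SN) v ∩ starN S :=
      ⟨⟨Germ.coe_le.2 (.of_forall fun i => hle_next (u i)), hle⟩,
        Eventually.of_forall fun i => hnextS (u i)⟩
    rwa [hempty] at hmem
  have hratio : ∀ᶠ i in hyperfilter ℕ,
      ((v i : ℝ) - u i) / ((d i : ℝ) - c i) ≤ r := by
    filter_upwards [Germ.coe_lt.1 hbeyond, Germ.coe_le.1 hcc', Germ.coe_le.1 hc'd, hcd]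
      with i hbey hci hid hLd
    have hgap : v i ≤ u i + L (d i) := by
      have := hL hid
      have := hnext_le (u i)
      simp only [Function.comp_apply] at hbey
      omega
    apply div_le_of_le_mul₀ (by simp [hci.trans hid]) hr
    have : (v i : ℝ) ≤ u i + L (d i) := by exact_mod_cast hgap
    linarith
  exact Hyperreal.coe_le_coe.1 (hs.trans (Germ.coe_le.2 hratio))

lemma lam_starN_le {S : Set ℕ} {c d : ℕ → ℕ} {N : ℕ} {a : ℕ → ℝ} {w : ℝ} (hw : 0 ≤ w)
    (hcov : ∀ᶠ i in hyperfilter ℕ, ∀ n ∈ S, c i ≤ n → n ≤ d i →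
      ∃ j < N, ((n : ℝ) - c i) / ((d i : ℝ) - c i) ∈ Icc (a j) (a j + w)) :
    lam (starN S) c d ≤ N * w := by
  have hsub : stI c d '' (starN S ∩ Icc (c : SN) d) ⊆
      ⋃ j ∈ Finset.range N, Icc (a j) (a j + w) := by
    rintro _ ⟨x, ⟨hxS, hcx, hxd⟩, rfl⟩
    induction x using Germ.inductionOn with | h f => ?_
    have hcov_f : ∀ᶠ i in hyperfilter ℕ, ∃ j ∈ Iio N,
        ((f i : ℝ) - c i) / ((d i : ℝ) - c i) ∈ Icc (a j) (a j + w) := by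
      filter_upwards [hcov, hxS, Germ.coe_le.1 hcx, Germ.coe_le.1 hxd] with i hi hiS hci hid
      exact hi (f i) hiS hci hid
    obtain ⟨j, hj, hfj⟩ := (Ultrafilter.eventually_exists_mem_iff (finite_Iio N)).1 hcov_f
    exact mem_biUnion (Finset.mem_range.2 hj)
      (st_mem_Icc (Germ.coe_le.2 (hfj.mono fun _ h => h.1))
        (Germ.coe_le.2 (hfj.mono fun _ h => h.2)))
  have hvol : volume (stI c d '' (starN S ∩ Icc (c : SN) d)) ≤ ENNReal.ofReal (N * w) :=
    calc _ ≤ volume (⋃ j ∈ Finset.range N, Icc (a j) (a j + w)) := measure_mono hsub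
      _ ≤ ∑ j ∈ Finset.range N, volume (Icc (a j) (a j + w)) := measure_biUnion_finset_le _ _
      _ = ENNReal.ofReal (N * w) := by simp [Real.volume_Icc, ENNReal.ofReal_mul]
  exact ENNReal.toReal_le_of_le_ofReal (by positivity) hvol

lemma not_IMOn_of_forall_gap_le {A : Set SN} {y z : SN} {θ : ℝ} (hθ : θ < 1)
    (h : ∀ δ > 0, ∃ c d, y ≤ c ∧ c ≤ d ∧ d ≤ z ∧ InfInterval c d ∧ gap A c d ≤ δ ∧
      lam A c d ≤ θ) :
    ¬ IMOn A y z := by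
  intro hIM
  obtain ⟨δ, hδ, hδIM⟩ := hIM ((1 - θ) / 2) (by linarith)
  obtain ⟨c, d, hyc, hcd, hdz, hinf, hgap, hlam⟩ := h δ hδ
  linarith [hδIM c d hyc hcd hdz hinf hgap]

lemma not_SIM_of_lam_square_window_le {S : Set ℕ}
    (hS : ∀ n, ∃ a ∈ S, n ≤ a ∧ a ≤ n + (2 * Nat.sqrt n + 2))
    (hlam : ∀ K ≥ 4, lam (starN S) (fun i => i * i : ℕ → ℕ) (fun i => (i + K) * (i + K) : ℕ → ℕ)
      ≤ 15 / 16) :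
    ¬ SIM S := by
  rintro ⟨hIM, -⟩
  have hcube : InfInterval (fun i => i * i : ℕ → ℕ) (fun i => i * i * i : ℕ → ℕ) :=
    infInterval_coe fun n => by
      filter_upwards [eventually_ge_atTop (n + 2)] with i hi
      nlinarith
  refine not_IMOn_of_forall_gap_le (θ := 15 / 16) (by norm_num) (fun δ hδ => ?_) (hIM _ _ hcube)
  set K := max 4 ⌈2 / δ⌉₊
  have hK : 4 ≤ K := le_max_left _ _
  have hKδ : 2 / (K : ℝ) ≤ δ := by
    rw [div_le_iff₀ (by positivity), ← div_le_iff₀' hδ]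
    exact (Nat.le_ceil _).trans (mod_cast le_max_right _ _)
  refine ⟨_, (fun i => (i + K) * (i + K) : ℕ → ℕ), le_rfl, ?_, ?_, ?_, ?_, hlam K hK⟩
  · exact Germ.coe_le.2 (.of_forall fun i => by nlinarith)
  · refine Germ.coe_le.2 ?_
    filter_upwards [eventually_le_hyperfilter (K + 4)] with i hi
    nlinarith
  · exact infInterval_coe fun n => by
      filter_upwards [eventually_ge_atTop (n + 1)] with i hi
      nlinarith
  · refine (gap_starN_le (L := fun n => 2 * Nat.sqrt n + 2)
      (fun m n hmn => by simp only; gcongr) hS (by positivity) ?_).trans hKδ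
    filter_upwards [eventually_le_hyperfilter 1] with i hi
    have hK0 : (0 : ℝ) < K := by positivity
    rw [Nat.sqrt_eq, div_mul_eq_mul_div, le_div_iff₀ hK0]
    have : (1 : ℝ) ≤ i := mod_cast hi
    push_cast
    nlinarith

lemma lam_square_window_le {S : Set ℕ} {K : ℕ} (hK : 4 ≤ K) (a : ℕ → ℝ)
    (hcov : ∀ᶠ i in hyperfilter ℕ, ∀ n ∈ S, i * i ≤ n → n ≤ (i + K) * (i + K) →
      ∃ j ≤ K, ((n : ℝ) - i * i) / (((i : ℝ) + K) * ((i : ℝ) + K) - i * i) ∈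
        Icc (a j) (a j + 3 / (4 * K))) :
    lam (starN S) (fun i => i * i : ℕ → ℕ) (fun i => (i + K) * (i + K) : ℕ → ℕ) ≤ 15 / 16 := by
  have hK' : (4 : ℝ) ≤ K := mod_cast hK
  calc _ ≤ ((K + 1 : ℕ) : ℝ) * (3 / (4 * K)) := by
        refine lam_starN_le (a := a) (by positivity) (hcov.mono fun i hi n hn h1 h2 => ?_)
        obtain ⟨j, hj, hpos⟩ := hi n hn h1 h2
        exact ⟨j, Nat.lt_succ_of_le hj, by push_cast; exact hpos⟩
    _ ≤ 15 / 16 := by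
        rw [mul_div_assoc', div_le_div_iff₀ (by positivity) (by norm_num)]
        push_cast
        linarith

def squareBlocks : Set ℕ := {n : ℕ | ∃ m : ℕ, m * m < n + m ∧ n ≤ m * m}

lemma mul_self_mem_squareBlocks {m : ℕ} (hm : 0 < m) : m * m ∈ squareBlocks :=
  ⟨m, by omega, le_rfl⟩

lemma mul_self_add_one_notMem_squareBlocks {m : ℕ} (hm : 0 < m) :
    m * m + 1 ∉ squareBlocks := by
  rintro ⟨k, hk, hk'⟩
  have : m + 1 ≤ k := Nat.mul_self_lt_mul_self_iff.1 (by omega)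
  nlinarith

lemma exists_mul_self_lt_of_notMem_squareBlocks {n : ℕ} (hn : n ∉ squareBlocks) (h0 : 0 < n) :
    ∃ m, m * m < n ∧ n ≤ m * m + m := by
  refine ⟨Nat.sqrt n, lt_of_le_of_ne (Nat.sqrt_le n) fun h => hn ?_, ?_⟩
  · rw [← h]
    exact mul_self_mem_squareBlocks (Nat.sqrt_pos.2 h0)
  · by_contra! h
    exact hn ⟨Nat.sqrt n + 1, by nlinarith, (Nat.lt_succ_sqrt n).le⟩

lemma exists_mem_squareBlocks_near (n : ℕ) :
    ∃ a ∈ squareBlocks, n ≤ a ∧ a ≤ n + (2 * Nat.sqrt n + 2) :=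
  ⟨(Nat.sqrt n + 1) * (Nat.sqrt n + 1), mul_self_mem_squareBlocks n.sqrt.succ_pos,
    (Nat.lt_succ_sqrt n).le, by nlinarith [Nat.sqrt_le n]⟩

lemma exists_notMem_squareBlocks_near (n : ℕ) :
    ∃ a ∈ squareBlocksᶜ, n ≤ a ∧ a ≤ n + (2 * Nat.sqrt n + 2) :=
  ⟨(Nat.sqrt n + 1) * (Nat.sqrt n + 1) + 1, mul_self_add_one_notMem_squareBlocks n.sqrt.succ_pos,
    by linarith [Nat.lt_succ_sqrt n], by nlinarith [Nat.sqrt_le n]⟩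

lemma exists_block_of_mem_squareBlocks {i K n : ℕ} (hn : n ∈ squareBlocks) (hi : i * i ≤ n)
    (hK : n ≤ (i + K) * (i + K)) :
    ∃ j ≤ K, (i + j) * (i + j) < n + (i + j) ∧ n ≤ (i + j) * (i + j) := by
  obtain ⟨m, hm, hm'⟩ := hn
  have him : i ≤ m := by nlinarith
  have hmK : m ≤ i + K := by nlinarith
  exact ⟨m - i, by omega, by rw [Nat.add_sub_cancel' him]; exact ⟨hm, hm'⟩⟩

lemma exists_block_of_notMem_squareBlocks {i K n : ℕ} (hn : n ∉ squareBlocks) (h0 : 0 < i)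
    (hi : i * i ≤ n) (hK : n ≤ (i + K) * (i + K)) :
    ∃ j < K, (i + j) * (i + j) < n ∧ n ≤ (i + j) * (i + j) + (i + j) := by
  obtain ⟨m, hm, hm'⟩ := exists_mul_self_lt_of_notMem_squareBlocks hn (by nlinarith)
  have him : i ≤ m := by nlinarith
  have hmK : m < i + K := by nlinarith
  exact ⟨m - i, by omega, by rw [Nat.add_sub_cancel' him]; exact ⟨hm, hm'⟩⟩

/- With `m = i + j`, the square `m²` sits at relative position `j / K + O(K / i)` of the window
`[i², (i + K)²]`, and a block of length `m` has relative length `1 / (2K) + O(K / i)`; the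
assumption `K * K ≤ i` absorbs the error terms. -/
section RelativePosition

variable {i j K x : ℝ}

lemma div_mem_Icc_of_lower_block (hK : 1 ≤ K) (hi : K * K ≤ i) (hj : 0 ≤ j) (hjK : j ≤ K)
    (h1 : (i + j) * (i + j) - (i + j) ≤ x) (h2 : x ≤ (i + j) * (i + j)) :
    (x - i * i) / ((i + K) * (i + K) - i * i) ∈
      Icc ((4 * j - 3) / (4 * K)) ((4 * j - 3) / (4 * K) + 3 / (4 * K)) := by
  have hD : 0 < (i + K) * (i + K) - i * i := by nlinarith
  have hK0 : 0 < 4 * K := by linarith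
  rw [← add_div, mem_Icc, div_le_div_iff₀ hK0 hD, div_le_div_iff₀ hD hK0]
  constructor
  · have : 0 ≤ K * (2 * i + 4 * j * j - 4 * j - 4 * j * K + 3 * K) :=
      mul_nonneg (by linarith) (by nlinarith [sq_nonneg (2 * j - K)])
    nlinarith [mul_le_mul_of_nonneg_left h1 hK0.le]
  · nlinarith [mul_le_mul_of_nonneg_left h2 hK0.le,
      mul_nonneg (mul_nonneg hj (sub_nonneg.2 hjK)) (by linarith : 0 ≤ K)]

lemma div_mem_Icc_of_upper_block (hK : 1 ≤ K) (hi : K * K ≤ i) (hj : 0 ≤ j) (hjK : j + 1 ≤ K)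
    (h1 : (i + j) * (i + j) ≤ x) (h2 : x ≤ (i + j) * (i + j) + (i + j)) :
    (x - i * i) / ((i + K) * (i + K) - i * i) ∈
      Icc ((4 * j - 1) / (4 * K)) ((4 * j - 1) / (4 * K) + 3 / (4 * K)) := by
  have hD : 0 < (i + K) * (i + K) - i * i := by nlinarith
  have hK0 : 0 < 4 * K := by linarith
  rw [← add_div, mem_Icc, div_le_div_iff₀ hK0 hD, div_le_div_iff₀ hD hK0]
  constructor
  · have : 0 ≤ K * (4 * j * j - 4 * j * K + 2 * i + K) :=
      mul_nonneg (by linarith) (by nlinarith [sq_nonneg (2 * j - K)])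
    nlinarith [mul_le_mul_of_nonneg_left h1 hK0.le]
  · nlinarith [mul_le_mul_of_nonneg_left h2 hK0.le,
      mul_nonneg (mul_nonneg hj (by linarith : 0 ≤ K - j - 1)) (by linarith : 0 ≤ K)]

end RelativePosition

lemma lam_squareBlocks_le {K : ℕ} (hK : 4 ≤ K) :
    lam (starN squareBlocks) (fun i => i * i : ℕ → ℕ) (fun i => (i + K) * (i + K) : ℕ → ℕ)
      ≤ 15 / 16 := by
  refine lam_square_window_le hK (fun j => (4 * j - 3) / (4 * K)) ?_
  filter_upwards [eventually_le_hyperfilter (K * K)] with i hi n hn h1 h2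
  obtain ⟨j, hjK, hj1, hj2⟩ := exists_block_of_mem_squareBlocks hn h1 h2
  refine ⟨j, hjK, div_mem_Icc_of_lower_block (by exact_mod_cast (by omega : 1 ≤ K))
    (by exact_mod_cast hi) j.cast_nonneg (by exact_mod_cast hjK) ?_ (by exact_mod_cast hj2)⟩
  have : ((i + j) * (i + j) : ℝ) ≤ n + (i + j) := by exact_mod_cast hj1.le
  linarith

lemma lam_compl_squareBlocks_le {K : ℕ} (hK : 4 ≤ K) :
    lam (starN squareBlocksᶜ) (fun i => i * i : ℕ → ℕ) (fun i => (i + K) * (i + K) : ℕ → ℕ)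
      ≤ 15 / 16 := by
  refine lam_square_window_le hK (fun j => (4 * j - 1) / (4 * K)) ?_
  filter_upwards [eventually_le_hyperfilter (K * K)] with i hi n hn h1 h2
  obtain ⟨j, hjK, hj1, hj2⟩ := exists_block_of_notMem_squareBlocks hn (by nlinarith) h1 h2
  exact ⟨j, hjK.le, div_mem_Icc_of_upper_block (by exact_mod_cast (by omega : 1 ≤ K))
    (by exact_mod_cast hi) j.cast_nonneg (by exact_mod_cast hjK) (by exact_mod_cast hj1.le)
    (by exact_mod_cast hj2)⟩

theorem stmt_10 :
    ∃ A : Set ℕ, A = {n : ℕ | ∃ m : ℕ, m * m < n + m ∧ n ≤ m * m} ∧ ¬ SIM A ∧ ¬ SIM Aᶜ :=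
  ⟨squareBlocks, rfl,
    not_SIM_of_lam_square_window_le exists_mem_squareBlocks_near fun _ => lam_squareBlocks_le,
    not_SIM_of_lam_square_window_le exists_notMem_squareBlocks_near
      fun _ => lam_compl_squareBlocks_le⟩
end

section
/- If A is finitely embedded in B and BD(A) > 0, then BD(B) > 0, where BD denotes upper Banach density. -/
open Filter Set MeasureTheory

/-- `A` is finitely embedded in `B`: every finite subset of `A` has a translate in `B`. -/
def FinEmbed (A B : Set ℕ) : Prop := ∀ F : Finset ℕ, ↑F ⊆ A → ∃ t : ℕ, ∀ a ∈ F, t + a ∈ B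

open scoped Classical in
/-- The upper Banach density of `A ⊆ ℕ`. -/
noncomputable def BD (A : Set ℕ) : ℝ :=
  ⨅ n : {n : ℕ // 0 < n}, ⨆ m : ℕ,
    ((Finset.Ioc m (m + (n : ℕ))).filter (· ∈ A)).card / ((n : ℕ) : ℝ)

theorem stmt_12 (A B : Set ℕ) (h : FinEmbed A B) (hA : 0 < BD A) : 0 < BD B := by
  classical
  have key : ∀ (n m : ℕ), ∃ m' : ℕ,
      ((Finset.Ioc m (m + n)).filter (· ∈ A)).card ≤
      ((Finset.Ioc m' (m' + n)).filter (· ∈ B)).card := by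
    intro n m
    set F := (Finset.Ioc m (m + n)).filter (· ∈ A) with hFdef
    have hF : ↑F ⊆ A := fun a ha => (Finset.mem_filter.mp ha).2
    obtain ⟨t, ht⟩ := h F hF
    refine ⟨t + m, ?_⟩
    have himg : F.image (t + ·) ⊆ (Finset.Ioc (t + m) (t + m + n)).filter (· ∈ B) := by
      intro x hx
      obtain ⟨a, ha, rfl⟩ := Finset.mem_image.mp hx
      have hm := Finset.mem_Ioc.mp (Finset.mem_filter.mp ha).1
      refine Finset.mem_filter.mpr ⟨Finset.mem_Ioc.mpr ⟨by omega, by omega⟩, ht a ha⟩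
    have hcard : F.card = (F.image (t + ·)).card :=
      (Finset.card_image_of_injective _ (add_right_injective t)).symm
    calc F.card = (F.image (t + ·)).card := hcard
      _ ≤ _ := Finset.card_le_card himg
  have hnonneg : ∀ (S : Set ℕ) (n : {n : ℕ // 0 < n}) (m : ℕ),
      (0 : ℝ) ≤ ((Finset.Ioc m (m + (n : ℕ))).filter (· ∈ S)).card / ((n : ℕ) : ℝ) := by
    intro S n m; positivity
  have hbdd : ∀ (S : Set ℕ) (n : {n : ℕ // 0 < n}),
      BddAbove (Set.range fun m : ℕ =>
        ((Finset.Ioc m (m + (n : ℕ))).filter (· ∈ S)).card / ((n : ℕ) : ℝ)) := by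
    intro S n
    refine ⟨1, ?_⟩
    rintro x ⟨m, rfl⟩
    have h1 : ((Finset.Ioc m (m + (n : ℕ))).filter (· ∈ S)).card ≤ (n : ℕ) := by
      calc ((Finset.Ioc m (m + (n : ℕ))).filter (· ∈ S)).card
          ≤ (Finset.Ioc m (m + (n : ℕ))).card := Finset.card_filter_le _ _
        _ = (n : ℕ) := by rw [Nat.card_Ioc]; omega
    rw [div_le_one (by exact_mod_cast n.2)]
    exact_mod_cast h1
  have hle : BD A ≤ BD B := by
    unfold BD
    apply ciInf_mono
    · exact ⟨0, by rintro x ⟨n, rfl⟩; exact le_ciSup_of_le (hbdd A n) 0 (hnonneg A n 0)⟩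
    · intro n
      apply ciSup_le
      intro m
      obtain ⟨m', hm'⟩ := key (n : ℕ) m
      refine le_trans ?_ (le_ciSup (hbdd B n) m')
      have hn : (0 : ℝ) < ((n : ℕ) : ℝ) := by exact_mod_cast n.2
      exact div_le_div_of_nonneg_right (by exact_mod_cast hm') hn.le
  linarith
end
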